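/- Let ψ(X,R,Y) = μ̄(X) + (R/π(X))(Y − μ̄(X)) − E[Y] with R ⊥ Y | X, E[R|X] = π(X) > 0 a.s. Then Var(ψ) = E[ ((1 − π(X))/π(X)) · E[(Y − μ̄(X))² | X] ] + Var(Y). -/

import Mathlib

/-!
Write `D = Y - μ̄(X)` and `T = (R / π(X)) D`, so that `ψ = μ̄(X) + T - E[Y]` and `Y = μ̄(X) + D`.
Under the conditional expectation kernel given `X`, `R` and `Y` are independent for almost every
value of `X`, so `R` is conditionally uncorrelated with `D` and with `D²`:
`E[R D | X] = π E[D | X]` and `E[R D² | X] = π E[D² | X]`. Pulling `X`-measurable weights out of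
the conditional expectation, `T` and `D` have the same mean and the same covariance with `μ̄(X)`,
while `E[T²] = E[π⁻¹ E[D² | X]]` because `R² = R`. Hence
`Var ψ - Var Y = E[T²] - E[D²] = E[((1 - π) / π) E[D² | X]]`.
-/

open MeasureTheory
open scoped ENNReal

namespace ProbabilityTheory

variable {Ω : Type*} {m mΩ : MeasurableSpace Ω} {μ : Measure Ω}

def CondUncorrelated (m : MeasurableSpace Ω) {mΩ : MeasurableSpace Ω} (f g : Ω → ℝ)
    (μ : Measure Ω) : Prop :=
  μ[f * g | m] =ᵐ[μ] μ[f | m] * μ[g | m]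

section CondExpKernel

variable [StandardBorelSpace Ω] [IsFiniteMeasure μ]

lemma ae_ae_condExpKernel_of_ae (hm : m ≤ mΩ) {p : Ω → Prop} (h : ∀ᵐ ω ∂μ, p ω) :
    ∀ᵐ ω ∂μ.trim hm, ∀ᵐ ω' ∂condExpKernel μ m ω, p ω' :=
  Measure.ae_ae_of_ae_comp (by rwa [condExpKernel_comp_trim hm])

variable {hm : m ≤ mΩ}

lemma CondIndepFun.congr_ae {β β' : Type*} [MeasurableSpace β] [MeasurableSpace β']
    {f f' : Ω → β} {g g' : Ω → β'} (hfg : CondIndepFun m hm f g μ) (hf : f =ᵐ[μ] f')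
    (hg : g =ᵐ[μ] g') : CondIndepFun m hm f' g' μ :=
  Kernel.IndepFun.congr' hfg (ae_ae_condExpKernel_of_ae hm hf) (ae_ae_condExpKernel_of_ae hm hg)

lemma CondIndepFun.ae_indepFun_condExpKernel {β β' : Type*}
    [MeasurableSpace β] [MeasurableSpace β']
    [MeasurableSpace.CountableOrCountablyGenerated Ω (β × β')]
    {f : Ω → β} {g : Ω → β'} (hfg : CondIndepFun m hm f g μ)
    (hf : AEMeasurable f μ) (hg : AEMeasurable g μ) :
    ∀ᵐ ω ∂μ, IndepFun f g (condExpKernel μ m ω) := by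
  have hf' := hf.measurable_mk
  have hg' := hg.measurable_mk
  have h_map := (condIndepFun_iff_map_prod_eq_prod_map_map hf' hg').1
    (hfg.congr_ae hf.ae_eq_mk hg.ae_eq_mk)
  refine ae_of_ae_trim hm ?_
  filter_upwards [h_map, ae_ae_condExpKernel_of_ae hm hf.ae_eq_mk,
    ae_ae_condExpKernel_of_ae hm hg.ae_eq_mk] with ω hω hfω hgω
  refine IndepFun.congr ?_ (Filter.EventuallyEq.symm hfω) (Filter.EventuallyEq.symm hgω)
  rw [indepFun_iff_map_prod_eq_prod_map_map hf'.aemeasurable hg'.aemeasurable]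
  simpa [Kernel.map_apply _ (hf'.prodMk hg'), Kernel.prod_apply, Kernel.map_apply _ hf',
    Kernel.map_apply _ hg'] using hω

lemma CondIndepFun.condUncorrelated {f g : Ω → ℝ} (hfg : CondIndepFun m hm f g μ)
    (hf : Integrable f μ) (hg : Integrable g μ) (hfg_int : Integrable (f * g) μ) :
    CondUncorrelated m f g μ := by
  filter_upwards [condExp_ae_eq_integral_condExpKernel hm hfg_int,
    condExp_ae_eq_integral_condExpKernel hm hf, condExp_ae_eq_integral_condExpKernel hm hg,
    hfg.ae_indepFun_condExpKernel hf.aemeasurable hg.aemeasurable,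
    hf.condExpKernel_ae, hg.condExpKernel_ae] with ω hfgω hfω hgω hind hfi hgi
  rw [hfgω, Pi.mul_apply, hfω, hgω]
  exact hind.integral_mul_eq_mul_integral hfi.1 hgi.1

end CondExpKernel

namespace CondUncorrelated

variable {f g g₁ g₂ h : Ω → ℝ}

lemma add (h₁ : CondUncorrelated m f g₁ μ) (h₂ : CondUncorrelated m f g₂ μ)
    (hg₁ : Integrable g₁ μ) (hg₂ : Integrable g₂ μ) (hfg₁ : Integrable (f * g₁) μ)
    (hfg₂ : Integrable (f * g₂) μ) : CondUncorrelated m f (g₁ + g₂) μ := by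
  unfold CondUncorrelated
  rw [mul_add]
  filter_upwards [condExp_add hfg₁ hfg₂ m, condExp_add hg₁ hg₂ m, h₁, h₂] with ω hfω hgω e₁ e₂
  simp only [Pi.add_apply, Pi.mul_apply] at *
  rw [hfω, hgω, e₁, e₂]
  ring

lemma sub (h₁ : CondUncorrelated m f g₁ μ) (h₂ : CondUncorrelated m f g₂ μ)
    (hg₁ : Integrable g₁ μ) (hg₂ : Integrable g₂ μ) (hfg₁ : Integrable (f * g₁) μ)
    (hfg₂ : Integrable (f * g₂) μ) : CondUncorrelated m f (g₁ - g₂) μ := by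
  unfold CondUncorrelated
  rw [mul_sub]
  filter_upwards [condExp_sub hfg₁ hfg₂ m, condExp_sub hg₁ hg₂ m, h₁, h₂] with ω hfω hgω e₁ e₂
  simp only [Pi.sub_apply, Pi.mul_apply] at *
  rw [hfω, hgω, e₁, e₂]
  ring

lemma mul_left (hfg : CondUncorrelated m f g μ) (hh : StronglyMeasurable[m] h)
    (hg : Integrable g μ) (hfg_int : Integrable (f * g) μ) (hhg : Integrable (h * g) μ)
    (hhfg : Integrable (h * (f * g)) μ) : CondUncorrelated m f (h * g) μ := by
  unfold CondUncorrelated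
  rw [mul_left_comm]
  filter_upwards [condExp_mul_of_stronglyMeasurable_left hh hhfg hfg_int,
    condExp_mul_of_stronglyMeasurable_left hh hhg hg, hfg] with ω hfω hgω e
  simp only [Pi.mul_apply] at *
  rw [hfω, hgω, e]
  ring

lemma of_stronglyMeasurable (hm : m ≤ mΩ) [SigmaFinite (μ.trim hm)]
    (hh : StronglyMeasurable[m] h) (hf : Integrable f μ) (hh_int : Integrable h μ)
    (hhf : Integrable (h * f) μ) : CondUncorrelated m f h μ := by
  unfold CondUncorrelated
  rw [mul_comm f, condExp_of_stronglyMeasurable hm hh hh_int, mul_comm _ h]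
  exact condExp_mul_of_stronglyMeasurable_left hh hhf hf

end CondUncorrelated

section CondIndepFun

variable [StandardBorelSpace Ω] [IsFiniteMeasure μ] {hm : m ≤ mΩ} {f Y a : Ω → ℝ}

lemma CondIndepFun.condUncorrelated_sub (hfY : CondIndepFun m hm f Y μ) (hf : MemLp f ∞ μ)
    (hY : MemLp Y 2 μ) (ha : StronglyMeasurable[m] a) (ha2 : MemLp a 2 μ) :
    CondUncorrelated m f (Y - a) μ := by
  have hf1 := hf.integrable le_top
  have hY1 := hY.integrable one_le_two
  have ha1 := ha2.integrable one_le_two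
  exact (hfY.condUncorrelated hf1 hY1 (hY1.mul_of_top_right hf)).sub
    (.of_stronglyMeasurable hm ha hf1 ha1 (ha1.mul_of_top_left hf))
    hY1 ha1 (hY1.mul_of_top_right hf) (ha1.mul_of_top_right hf)

lemma CondIndepFun.condUncorrelated_sub_sq (hfY : CondIndepFun m hm f Y μ) (hf : MemLp f ∞ μ)
    (hY : MemLp Y 2 μ) (ha : StronglyMeasurable[m] a) (ha2 : MemLp a 2 μ) :
    CondUncorrelated m f ((Y - a) ^ 2) μ := by
  have hfmul {g : Ω → ℝ} (hg : Integrable g μ) : Integrable (f * g) μ := hg.mul_of_top_right hf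
  have hf1 := hf.integrable le_top
  have hY1 := hY.integrable one_le_two
  have hYsq : Integrable (Y ^ 2) μ := hY.integrable_sq
  have hasq : Integrable (a ^ 2) μ := ha2.integrable_sq
  have haY : Integrable ((2 * a) * Y) μ := (ha2.const_mul 2).integrable_mul hY
  have hfY2 : CondIndepFun m hm f (Y ^ 2) μ := by
    convert hfY.comp (φ := id) (ψ := (· ^ 2)) measurable_id (measurable_id.pow_const 2) using 1
    <;> rfl
  have h_lin : CondUncorrelated m f ((2 * a) * Y) μ :=
    (hfY.condUncorrelated hf1 hY1 (hfmul hY1)).mul_left (stronglyMeasurable_const.mul ha) hY1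
      (hfmul hY1) haY (by rw [mul_left_comm]; exact hfmul haY)
  have h_sq : CondUncorrelated m f (a ^ 2) μ :=
    .of_stronglyMeasurable hm (ha.pow 2) hf1 hasq (hasq.mul_of_top_left hf)
  rw [show (Y - a) ^ 2 = Y ^ 2 - (2 * a) * Y + a ^ 2 by ring]
  exact ((hfY2.condUncorrelated hf1 hYsq (hfmul hYsq)).sub h_lin hYsq haY (hfmul hYsq)
    (hfmul haY)).add h_sq (hYsq.sub haY) hasq (hfmul (hYsq.sub haY)) (hfmul hasq)

end CondIndepFun

section InverseWeighting

variable {R W π g h : Ω → ℝ}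

lemma integral_mul_eq_integral_mul_condExp (hm : m ≤ mΩ) [SigmaFinite (μ.trim hm)]
    (hh : StronglyMeasurable[m] h) (hg : Integrable g μ) (hhg : Integrable (h * g) μ) :
    ∫ ω, h ω * g ω ∂μ = ∫ ω, h ω * μ[g | m] ω ∂μ :=
  calc ∫ ω, h ω * g ω ∂μ = ∫ ω, μ[h * g | m] ω ∂μ := (integral_condExp hm).symm
    _ = ∫ ω, h ω * μ[g | m] ω ∂μ :=
      integral_congr_ae (condExp_mul_of_stronglyMeasurable_left hh hhg hg)

lemma CondUncorrelated.integral_mul_div_mul (hm : m ≤ mΩ) [SigmaFinite (μ.trim hm)]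
    (hRW : CondUncorrelated m R W μ) (hπ : π =ᵐ[μ] μ[R | m]) (hπ0 : ∀ᵐ ω ∂μ, π ω ≠ 0)
    (hπm : StronglyMeasurable[m] π) (hh : StronglyMeasurable[m] h)
    (hRW_int : Integrable (R * W) μ) (hint : Integrable (fun ω ↦ h ω * (R ω / π ω * W ω)) μ) :
    ∫ ω, h ω * (R ω / π ω * W ω) ∂μ = ∫ ω, h ω * μ[W | m] ω ∂μ := by
  have hdiv (ω : Ω) : h ω * (R ω / π ω * W ω) = (h / π) ω * (R * W) ω := by
    simp only [Pi.div_apply, Pi.mul_apply]; ring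
  simp_rw [hdiv] at hint ⊢
  rw [integral_mul_eq_integral_mul_condExp hm (hh.div hπm) hRW_int hint]
  refine integral_congr_ae ?_
  filter_upwards [hRW, hπ, hπ0] with ω hRWω hπω hπ0ω
  rw [hRWω, Pi.mul_apply, ← hπω, Pi.div_apply]
  field_simp

end InverseWeighting

lemma variance_add_eq_of_integral_eq [IsProbabilityMeasure μ] {V T D : Ω → ℝ}
    (hV : MemLp V 2 μ) (hT : MemLp T 2 μ) (hD : MemLp D 2 μ)
    (h_mean : ∫ ω, T ω ∂μ = ∫ ω, D ω ∂μ) (h_cross : ∫ ω, V ω * T ω ∂μ = ∫ ω, V ω * D ω ∂μ) :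
    variance (V + T) μ = variance (V + D) μ + (∫ ω, T ω ^ 2 ∂μ - ∫ ω, D ω ^ 2 ∂μ) := by
  rw [variance_add hV hT, variance_add hV hD, covariance_eq_sub hV hT, covariance_eq_sub hV hD,
    variance_eq_sub hT, variance_eq_sub hD]
  simp only [Pi.mul_apply, Pi.pow_apply]
  rw [h_mean, h_cross]
  ring

lemma integral_one_div_mul_sub_integral {π E : Ω → ℝ} (hπ0 : ∀ᵐ ω ∂μ, π ω ≠ 0)
    (hw : Integrable (fun ω ↦ (1 - π ω) / π ω * E ω) μ) (hE : Integrable E μ) :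
    ∫ ω, 1 / π ω * E ω ∂μ - ∫ ω, E ω ∂μ = ∫ ω, (1 - π ω) / π ω * E ω ∂μ := by
  have h_split : (fun ω ↦ 1 / π ω * E ω) =ᵐ[μ] fun ω ↦ (1 - π ω) / π ω * E ω + E ω := by
    filter_upwards [hπ0] with ω h0
    field_simp
    ring
  rw [integral_congr_ae h_split, integral_add hw hE]
  ring

lemma variance_add_div_mul_of_condUncorrelated [IsProbabilityMeasure μ] (hm : m ≤ mΩ)
    {R π a D : Ω → ℝ} (hR01 : ∀ ω, R ω = 0 ∨ R ω = 1) (hR : MemLp R ∞ μ)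
    (hπ : π =ᵐ[μ] μ[R | m]) (hπ0 : ∀ᵐ ω ∂μ, π ω ≠ 0) (hπm : StronglyMeasurable[m] π)
    (ha : StronglyMeasurable[m] a) (ha2 : MemLp a 2 μ) (hD : MemLp D 2 μ)
    (hRD : CondUncorrelated m R D μ) (hRD2 : CondUncorrelated m R (D ^ 2) μ)
    (hT : MemLp (fun ω ↦ R ω / π ω * D ω) 2 μ)
    (hw : Integrable (fun ω ↦ (1 - π ω) / π ω * μ[D ^ 2 | m] ω) μ) :
    variance (fun ω ↦ a ω + R ω / π ω * D ω) μ =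
      variance (a + D) μ + ∫ ω, (1 - π ω) / π ω * μ[D ^ 2 | m] ω ∂μ := by
  have hD1 := hD.integrable one_le_two
  have h_weighted {b : Ω → ℝ} (hb : StronglyMeasurable[m] b) (hb2 : MemLp b 2 μ) :
      ∫ ω, b ω * (R ω / π ω * D ω) ∂μ = ∫ ω, b ω * D ω ∂μ :=
    (hRD.integral_mul_div_mul hm hπ hπ0 hπm hb (hD1.mul_of_top_right hR)
      (hb2.integrable_mul hT)).trans
      (integral_mul_eq_integral_mul_condExp hm hb hD1 (hb2.integrable_mul hD)).symm
  have h_sq (ω : Ω) : (R ω / π ω * D ω) ^ 2 = 1 / π ω * (R ω / π ω * (D ^ 2) ω) := by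
    rcases hR01 ω with h | h <;> simp [h]
    ring
  have h_moment : ∫ ω, (R ω / π ω * D ω) ^ 2 ∂μ = ∫ ω, 1 / π ω * μ[D ^ 2 | m] ω ∂μ := by
    simp_rw [h_sq]
    exact hRD2.integral_mul_div_mul hm hπ hπ0 hπm (stronglyMeasurable_const.div hπm)
      (hD.integrable_sq.mul_of_top_right hR) (by simpa only [h_sq] using hT.integrable_sq)
  rw [← integral_one_div_mul_sub_integral hπ0 hw integrable_condExp, integral_condExp hm,
    ← h_moment]
  exact variance_add_eq_of_integral_eq ha2 hT hD
    (by simpa using h_weighted stronglyMeasurable_one (memLp_const 1)) (h_weighted ha ha2)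

lemma integrable_of_ae_condExp_ne_zero [NeZero μ] {f : Ω → ℝ}
    (h : ∀ᵐ ω ∂μ, μ[f | m] ω ≠ 0) : Integrable f μ := by
  by_contra hf
  rw [condExp_of_not_integrable hf] at h
  simpa using h.exists

end ProbabilityTheory

open ProbabilityTheory

/-- Variance decomposition of the AIPW influence function
`ψ = μ̄(X) + (R/π(X))(Y − μ̄(X)) − E[Y]` under MAR with true propensity `π`:
`Var(ψ) = E[((1 − π(X))/π(X))·E[(Y − μ̄(X))² | X]] + Var(Y)`. -/
theorem aipw_variance_decomposition
    {Ω : Type*} {mΩ : MeasurableSpace Ω} [StandardBorelSpace Ω]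
    {μ : Measure Ω} [IsProbabilityMeasure μ]
    (mX : MeasurableSpace Ω) (hmX : mX ≤ mΩ)
    (R Y : Ω → ℝ)
    (hR01 : ∀ ω, R ω = 0 ∨ R ω = 1)
    -- MAR: R ⊥ Y | X, where mX = σ(X)
    (hMAR : CondIndepFun mX hmX R Y μ)
    (πX : Ω → ℝ)
    (hπX : Measurable[mX] πX)
    (hπ : πX =ᵐ[μ] μ[R | mX])
    (hπpos : ∀ᵐ ω ∂μ, 0 < πX ω)
    (mbar : Ω → ℝ) (hmbar : Measurable[mX] mbar)
    (hY2 : MemLp Y 2 μ) (hmbar2 : MemLp mbar 2 μ)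
    (hψ2 : MemLp (fun ω =>
        mbar ω + (R ω / πX ω) * (Y ω - mbar ω) - ∫ ω', Y ω' ∂μ) 2 μ)
    (hwint : Integrable (fun ω =>
        ((1 - πX ω) / πX ω) * (μ[fun ω' => (Y ω' - mbar ω') ^ 2 | mX]) ω) μ) :
    variance (fun ω =>
        mbar ω + (R ω / πX ω) * (Y ω - mbar ω) - ∫ ω', Y ω' ∂μ) μ =
      (∫ ω, ((1 - πX ω) / πX ω) *
          (μ[fun ω' => (Y ω' - mbar ω') ^ 2 | mX]) ω ∂μ) + variance Y μ := by
  rw [show (fun ω' ↦ (Y ω' - mbar ω') ^ 2) = (Y - mbar) ^ 2 from rfl] at hwint ⊢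
  have hπ0 : ∀ᵐ ω ∂μ, πX ω ≠ 0 := hπpos.mono fun _ h ↦ h.ne'
  have hR : MemLp R ∞ μ := by
    refine memLp_top_of_bound (integrable_of_ae_condExp_ne_zero (m := mX) ?_).1 1
      (ae_of_all _ fun ω ↦ by rcases hR01 ω with h | h <;> simp [h])
    filter_upwards [hπ, hπ0] with ω h h0 using h ▸ h0
  have hT2 : MemLp (fun ω ↦ R ω / πX ω * (Y - mbar) ω) 2 μ := by
    convert (hψ2.sub hmbar2).add (memLp_const (∫ ω', Y ω' ∂μ)) using 1
    funext ω
    simp only [Pi.add_apply, Pi.sub_apply]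
    ring
  have hmbar_sm := hmbar.stronglyMeasurable
  calc _ = variance (fun ω ↦ mbar ω + R ω / πX ω * (Y - mbar) ω) μ :=
        variance_sub_const (hmbar2.1.add hT2.1) _
    _ = variance (mbar + (Y - mbar)) μ +
          ∫ ω, (1 - πX ω) / πX ω * μ[(Y - mbar) ^ 2 | mX] ω ∂μ :=
        variance_add_div_mul_of_condUncorrelated hmX hR01 hR hπ hπ0 hπX.stronglyMeasurable
          hmbar_sm hmbar2 (hY2.sub hmbar2) (hMAR.condUncorrelated_sub hR hY2 hmbar_sm hmbar2)
          (hMAR.condUncorrelated_sub_sq hR hY2 hmbar_sm hmbar2) hT2 hwint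
    _ = _ := by rw [add_sub_cancel, add_comm]
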